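/- arXiv:2004.01410 — 8 statements merged into one kernel-verified Lean document; each statement's English description precedes it below -/
import Mathlib

section
/- Over-approximation of answer sets by omission abstraction: for every normal logic program Π over a set 𝒜 of atoms, every set A ⊆ 𝒜 of atoms and every answer set I ∈ AS(Π), the projection I|_Ā = I ∩ (𝒜\A) is an answer set of omit(Π,A). -/
universe u

namespace ASP

/-- The head of a rule: falsity `⊥` (a constraint), a plain atom head,
or a choice head `{a}` (the common syntactic extension). -/
inductive Head (α : Type u) : Type u where
  | bot : Head α
  | atom : α → Head α
  | choice : α → Head α

/-- A (ground) rule with a head, a positive body `B⁺` and a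
(default-)negated body `B⁻`. -/
structure Rule (α : Type u) : Type u where
  head : Head α
  pos : Set α
  neg : Set α

/-- A (ground, propositional) program is a set of rules. -/
abbrev Program (α : Type u) : Type u := Set (Rule α)

def Head.atoms {α : Type u} : Head α → Set α
  | .bot => ∅
  | .atom a => {a}
  | .choice a => {a}

/-- `B±(r) = B⁺(r) ∪ B⁻(r)`. -/
def Rule.bodyAtoms {α : Type u} (r : Rule α) : Set α :=
  r.pos ∪ r.neg

def Rule.atoms {α : Type u} (r : Rule α) : Set α :=
  r.head.atoms ∪ r.bodyAtoms

/-- The program `P` uses only atoms from `𝒜`. -/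
def ProgramOver {α : Type u} (P : Program α) (𝒜 : Set α) : Prop :=
  ∀ r ∈ P, r.atoms ⊆ 𝒜

/-- A normal program: every head is an atom or `⊥` (no genuine choice heads). -/
def IsNormal {α : Type u} (P : Program α) : Prop :=
  ∀ r ∈ P, ∀ a : α, r.head ≠ Head.choice a

/-- `I ⊨ B(r)`, i.e. `B⁺(r) ⊆ I` and `B⁻(r) ∩ I = ∅`. -/
def bodySat {α : Type u} (I : Set α) (r : Rule α) : Prop :=
  r.pos ⊆ I ∧ ∀ a ∈ r.neg, a ∉ I

def headSat {α : Type u} (I : Set α) : Head α → Prop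
  | .bot => False
  | .atom a => a ∈ I
  | .choice _ => True

def isModel {α : Type u} (I : Set α) (P : Program α) : Prop :=
  ∀ r ∈ P, bodySat I r → headSat I r.head

/-- Satisfaction by `J` of the head of a rule of the FLP-reduct `P^I`.
A choice head `{a}` abbreviates the pair of rules `a ← B, not ā` and
`ā ← B, not a` for a fresh complement atom `ā`; projected onto the original
atoms this amounts to the condition `a ∈ I → a ∈ J`. -/
def headSatReduct {α : Type u} (I J : Set α) : Head α → Prop
  | .bot => False
  | .atom a => a ∈ J
  | .choice a => a ∈ I → a ∈ J

/-- `J` is a model of the FLP-reduct `P^I = {r ∈ P | I ⊨ B(r)}`. -/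
def satReduct {α : Type u} (J I : Set α) (P : Program α) : Prop :=
  ∀ r ∈ P, bodySat I r → bodySat J r → headSatReduct I J r.head

/-- `I` is an answer set of `P` iff `I` is a `⊆`-minimal model of the
FLP-reduct `P^I` (note that `I ⊨ P^I` iff `I ⊨ P`). -/
def isAnswerSet {α : Type u} (P : Program α) (I : Set α) : Prop :=
  isModel I P ∧ ∀ J ⊆ I, satReduct J I P → J = I

/-- `AS(P)`, the collection of answer sets of `P`. -/
def AS {α : Type u} (P : Program α) : Set (Set α) :=
  {I | isAnswerSet P I}

/-- The head is omitted, i.e. it is an atom (or choice atom) belonging to `A`;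
`⊥` is never in a set of omitted *atoms*. -/
def Head.omitted {α : Type u} (A : Set α) : Head α → Prop
  | .bot => False
  | .atom a => a ∈ A
  | .choice a => a ∈ A

def Head.toChoice {α : Type u} : Head α → Head α
  | .bot => .bot
  | .atom a => .choice a
  | .choice a => .choice a

/-- How a single rule `r` of the program is transformed into a rule `r'` of the
abstraction when the atoms in `A` are omitted:
(a) `r` is kept unchanged if it contains no omitted atom;
(b) if the body contains an omitted atom but the head is not omitted and not `⊥`,
the body is projected to the remaining atoms and the head becomes a choice;
(c) otherwise the rule is deleted (no `r'` is produced). -/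
def omitRel {α : Type u} (A : Set α) (r r' : Rule α) : Prop :=
  (r.bodyAtoms ∩ A = ∅ ∧ ¬ Head.omitted A r.head ∧ r' = r) ∨
  (r.bodyAtoms ∩ A ≠ ∅ ∧ ¬ Head.omitted A r.head ∧ r.head ≠ Head.bot ∧
    r' = ⟨Head.toChoice r.head, r.pos \ A, r.neg \ A⟩)

/-- The omission abstraction `omit(P, A)`. -/
def omitA {α : Type u} (P : Program α) (A : Set α) : Program α :=
  {r' | ∃ r ∈ P, omitRel A r r'}


/-- over-approximation: for every normal logic program `P`
over a finite set `𝒜` of atoms, every `A ⊆ 𝒜` and every answer set `I` of `P`,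
the projection `I ∩ (𝒜 \ A)` is an answer set of `omit(P, A)`. -/
theorem over_approximation {α : Type u} (P : Program α) (𝒜 A I : Set α)
    (h𝒜 : 𝒜.Finite) (hnorm : IsNormal P) (hP : ProgramOver P 𝒜)
    (hA : A ⊆ 𝒜) (hI : I ∈ AS P) :
    I ∩ (𝒜 \ A) ∈ AS (omitA P A) := by
  obtain ⟨hImod, hImin⟩ := hI
  -- Every answer set is contained in the atom set 𝒜.
  have hI𝒜 : I ⊆ 𝒜 := by
    have h : I ∩ 𝒜 = I := by
      refine hImin (I ∩ 𝒜) Set.inter_subset_left ?_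
      intro r hr hbI _hbJ
      have hheadI := hImod r hr hbI
      cases h : r.head with
      | bot => rw [h] at hheadI; exact hheadI.elim
      | atom b =>
        rw [h] at hheadI
        exact ⟨hheadI, hP r hr (Or.inl (by rw [h]; rfl))⟩
      | choice b =>
        intro hbI2
        exact ⟨hbI2, hP r hr (Or.inl (by rw [h]; rfl))⟩
    intro x hx
    rw [← h] at hx
    exact hx.2
  set I' : Set α := I ∩ (𝒜 \ A) with hI'def
  have hI'I : I' ⊆ I := Set.inter_subset_left
  constructor
  · -- I' is a model of omitA P A
    rintro r' ⟨r, hr, hrel⟩ hb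
    rcases hrel with ⟨hbody, hho, heq⟩ | ⟨hbody, hho, hbot, heq⟩
    · -- rule kept unchanged
      rw [heq] at hb ⊢
      have hbodyI : bodySat I r := by
        refine ⟨fun x hx => hI'I (hb.1 hx), ?_⟩
        intro a ha haI
        have ha𝒜 : a ∈ 𝒜 := hP r hr (Or.inr (Or.inr ha))
        have haA : a ∉ A := by
          intro hA'
          exact absurd (Set.eq_empty_iff_forall_notMem.mp hbody a)
            (by simp [Rule.bodyAtoms, ha, hA'])
        exact hb.2 a ha ⟨haI, ha𝒜, haA⟩
      have hheadI := hImod r hr hbodyI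
      cases h : r.head with
      | bot => rw [h] at hheadI; exact hheadI.elim
      | atom b =>
        rw [h] at hheadI hho
        have hb𝒜 : b ∈ 𝒜 := hP r hr (Or.inl (by rw [h]; rfl))
        exact ⟨hheadI, hb𝒜, hho⟩
      | choice b => trivial
    · -- rule turned into a choice rule: head is a choice, trivially satisfied
      rw [heq]
      show headSat I' r.head.toChoice
      cases h : r.head with
      | bot => exact absurd h hbot
      | atom b => trivial
      | choice b => exact absurd h (hnorm r hr b)
  · -- minimality
    intro J hJI' hJred
    set K : Set α := J ∪ (I ∩ A) with hKdef
    have hKI : K ⊆ I := by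
      intro x hx
      rcases hx with hx | hx
      · exact hI'I (hJI' hx)
      · exact hx.1
    have hKred : satReduct K I P := by
      intro r hr hbI hbK
      have hheadI := hImod r hr hbI
      cases h : r.head with
      | bot => rw [h] at hheadI; exact hheadI.elim
      | choice b => exact absurd h (hnorm r hr b)
      | atom b =>
        rw [h] at hheadI
        show b ∈ K
        by_cases hbA : b ∈ A
        · exact Or.inr ⟨hheadI, hbA⟩
        · have hb𝒜 : b ∈ 𝒜 := hP r hr (Or.inl (by rw [h]; rfl))
          have hbI' : b ∈ I' := ⟨hheadI, hb𝒜, hbA⟩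
          -- positive body atoms outside A are in J
          have hposJ : ∀ x ∈ r.pos, x ∉ A → x ∈ J := by
            intro x hx hxA
            rcases hbK.1 hx with hxJ | hxIA
            · exact hxJ
            · exact absurd hxIA.2 hxA
          have hnegI' : ∀ a ∈ r.neg, a ∉ I' := fun a ha haI' =>
            hbI.2 a ha (hI'I haI')
          have hnegJ : ∀ a ∈ r.neg, a ∉ J := fun a ha haJ =>
            hbI.2 a ha (hI'I (hJI' haJ))
          by_cases hbody : r.bodyAtoms ∩ A = ∅
          · -- rule kept unchanged in the abstraction
            have hnoA : ∀ x ∈ r.bodyAtoms, x ∉ A := fun x hx hxA =>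
              absurd (Set.eq_empty_iff_forall_notMem.mp hbody x)
                (by simp [hx, hxA])
            have hr' : r ∈ omitA P A :=
              ⟨r, hr, Or.inl ⟨hbody, by rw [h]; exact hbA, rfl⟩⟩
            have hposJ' : r.pos ⊆ J := fun x hx =>
              hposJ x hx (hnoA x (Or.inl hx))
            have hbI'r : bodySat I' r :=
              ⟨fun x hx => hJI' (hposJ' hx), hnegI'⟩
            have hbJr : bodySat J r := ⟨hposJ', hnegJ⟩
            have := hJred r hr' hbI'r hbJr
            rw [h] at this
            exact Or.inl this
          · -- rule becomes a choice rule
            have hho : ¬ Head.omitted A r.head := by rw [h]; exact hbA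
            have hbot : r.head ≠ Head.bot := by rw [h]; simp
            set r' : Rule α := ⟨Head.choice b, r.pos \ A, r.neg \ A⟩ with hr'def
            have hr' : r' ∈ omitA P A :=
              ⟨r, hr, Or.inr ⟨hbody, hho, hbot, by rw [hr'def, h]; rfl⟩⟩
            have hposJ' : r'.pos ⊆ J := fun x hx => hposJ x hx.1 hx.2
            have hbI'r : bodySat I' r' :=
              ⟨fun x hx => hJI' (hposJ' hx), fun a ha => hnegI' a ha.1⟩
            have hbJr : bodySat J r' :=
              ⟨hposJ', fun a ha => hnegJ a ha.1⟩
            have hred := hJred r' hr' hbI'r hbJr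
            have hbJ : b ∈ J := hred hbI'
            exact Or.inl hbJ
    have hKeq : K = I := hImin K hKI hKred
    apply Set.Subset.antisymm hJI'
    intro x hx
    have hxI : x ∈ K := by rw [hKeq]; exact hx.1
    rcases hxI with hxJ | hxIA
    · exact hxJ
    · exact absurd hxIA.2 hx.2.2

end ASP
end

section
/- Characterization of spuriousness via a query program: for any normal logic program Π over atoms 𝒜 and set A ⊆ 𝒜, an abstract answer set Î ∈ AS(omit(Π,A)) is spurious if and only if the program Π ∪ Q_Î^Ā is unsatisfiable (has no answer set), where Q_Î^Ā = {⊥ ← not α | α ∈ Î} ∪ {⊥ ← α | α ∈ Ā\Î}. -/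
universe u

namespace ASP

/-- The query program `Q_Î^Ā = {⊥ ← not a | a ∈ Î} ∪ {⊥ ← a | a ∈ Ā \ Î}`. -/
def query {α : Type u} (Abar Ihat : Set α) : Program α :=
  {r | (∃ a ∈ Ihat, r = (⟨Head.bot, ∅, {a}⟩ : Rule α)) ∨
       (∃ a ∈ Abar \ Ihat, r = (⟨Head.bot, {a}, ∅⟩ : Rule α))}


lemma AS_subset_heads {α : Type u} (P : Program α) (I : Set α) (h : I ∈ AS P) :
    I ⊆ {a | ∃ r ∈ P, a ∈ r.head.atoms} := by
  set H : Set α := {a | ∃ r ∈ P, a ∈ r.head.atoms} with hH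
  have key : I ∩ H = I := by
    apply h.2 (I ∩ H) Set.inter_subset_left
    intro r hr hbI _
    have hhead := h.1 r hr hbI
    cases hh : r.head with
    | bot => rw [hh] at hhead; exact hhead.elim
    | atom a =>
        rw [hh] at hhead
        exact ⟨hhead, ⟨r, hr, by rw [hh]; exact rfl⟩⟩
    | choice a =>
        intro haI
        exact ⟨haI, ⟨r, hr, by rw [hh]; exact rfl⟩⟩
  intro a ha
  rw [← key] at ha
  exact ha.2

/-- spuriousness via the query program: an abstract answer set
`Î ∈ AS(omit(P, A))` is spurious (i.e. not of the form `I ∩ (𝒜 \ A)` for some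
`I ∈ AS(P)`) iff `P ∪ Q_Î^Ā` has no answer set. -/
theorem spurious_iff_query_unsat {α : Type u} (P : Program α) (𝒜 A Ihat : Set α)
    (h𝒜 : 𝒜.Finite) (hnorm : IsNormal P) (hP : ProgramOver P 𝒜)
    (hA : A ⊆ 𝒜) (hIhat : Ihat ∈ AS (omitA P A)) :
    Ihat ∉ (fun I => I ∩ (𝒜 \ A)) '' AS P ↔
      AS (P ∪ query (𝒜 \ A) Ihat) = ∅ := by
  -- `Ihat ⊆ 𝒜 \ A`
  have hIhatsub : Ihat ⊆ 𝒜 \ A := by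
    intro a ha
    obtain ⟨r', ⟨r, hrP, hrel⟩, hahead⟩ := AS_subset_heads _ _ hIhat ha
    have hatoms := hP r hrP
    rcases hrel with ⟨_, hnom, heq⟩ | ⟨_, hnom, hbot, heq⟩
    · rw [heq] at hahead
      cases hh : r.head with
      | bot => rw [hh] at hahead; exact hahead.elim
      | atom b =>
          rw [hh] at hahead hnom
          cases hahead
          exact ⟨hatoms (Or.inl (by rw [hh]; exact rfl)), hnom⟩
      | choice b => exact absurd hh (hnorm r hrP b)
    · rw [heq] at hahead
      cases hh : r.head with
      | bot => exact absurd hh hbot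
      | atom b =>
          rw [hh] at hahead hnom
          simp only [Head.toChoice, Head.atoms, Set.mem_singleton_iff] at hahead
          cases hahead
          exact ⟨hatoms (Or.inl (by rw [hh]; exact rfl)), hnom⟩
      | choice b => exact absurd hh (hnorm r hrP b)
  constructor
  · -- spurious → unsat
    intro hsp
    by_contra hne
    obtain ⟨I, hI⟩ := Set.nonempty_iff_ne_empty.mpr hne
    apply hsp
    have hIAS : I ∈ AS P := by
      constructor
      · intro r hr hb; exact hI.1 r (Or.inl hr) hb
      · intro J hJ hsr
        apply hI.2 J hJ
        intro r hr hbI hbJ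
        rcases hr with hr | hq
        · exact hsr r hr hbI hbJ
        · have hf := hI.1 r (Or.inr hq) hbI
          rcases hq with ⟨a, _, rfl⟩ | ⟨a, _, rfl⟩ <;> exact hf.elim
    refine ⟨I, hIAS, ?_⟩
    ext a
    constructor
    · rintro ⟨haI, haAbar⟩
      by_contra han
      exact hI.1 _ (Or.inr (Or.inr ⟨a, ⟨haAbar, han⟩, rfl⟩))
        ⟨Set.singleton_subset_iff.mpr haI, fun b hb => hb.elim⟩
    · intro ha
      refine ⟨?_, hIhatsub ha⟩
      by_contra haI
      exact hI.1 _ (Or.inr (Or.inl ⟨a, ha, rfl⟩))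
        ⟨Set.empty_subset I, fun b hb => by cases hb; exact haI⟩
  · -- unsat → spurious
    rintro hempty ⟨I, hIAS, hIeq⟩
    have : I ∈ AS (P ∪ query (𝒜 \ A) Ihat) := by
      constructor
      · intro r hr hb
        rcases hr with hr | hq
        · exact hIAS.1 r hr hb
        · rcases hq with ⟨a, haIhat, rfl⟩ | ⟨a, ⟨haAbar, han⟩, rfl⟩
          · have haI : a ∈ I := by
              rw [← hIeq] at haIhat; exact haIhat.1
            exact (hb.2 a rfl haI)
          · have : a ∈ Ihat := by
              rw [← hIeq]; exact ⟨hb.1 rfl, haAbar⟩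
            exact han this
      · intro J hJ hsr
        apply hIAS.2 J hJ
        intro r hr hbI hbJ
        exact hsr r (Or.inl hr) hbI hbJ
    rw [hempty] at this
    exact this


end ASP
end

section
/- Preservation of unsatisfiability downward: for any normal logic program Π over atoms 𝒜 and any A ⊆ 𝒜, if AS(omit(Π,A)) = ∅ then AS(Π) = ∅. -/
universe u

namespace ASP

/-- preservation of unsatisfiability downward: for any normal
logic program `P` over a finite set `𝒜` of atoms and any `A ⊆ 𝒜`, if
`AS(omit(P, A)) = ∅` then `AS(P) = ∅`. -/
theorem unsat_downward {α : Type u} (P : Program α) (𝒜 A : Set α)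
    (h𝒜 : 𝒜.Finite) (hnorm : IsNormal P) (hP : ProgramOver P 𝒜)
    (hA : A ⊆ 𝒜) :
    AS (omitA P A) = ∅ → AS P = ∅ := by
  intro hempty
  rw [Set.eq_empty_iff_forall_notMem]
  intro I hI
  obtain ⟨hmod, hmin⟩ := hI
  have hI' : (I \ A) ∈ AS (omitA P A) := by
    constructor
    · -- model of omitA
      rintro r' ⟨r, hr, hrel⟩ hbs
      rcases hrel with ⟨hdisj, hhead, heq⟩ | ⟨hne, hhead, hbot, heq⟩ <;> subst heq
      · -- kept rule
        have hbsI : bodySat I r' := by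
          constructor
          · exact fun a ha => (hbs.1 ha).1
          · intro a ha haI
            have haA : a ∉ A := fun hA' =>
              Set.eq_empty_iff_forall_notMem.mp hdisj a ⟨Set.mem_union_right _ ha, hA'⟩
            exact hbs.2 a ha ⟨haI, haA⟩
        have hhs := hmod _ hr hbsI
        cases hd : r'.head with
        | bot => rw [hd] at hhs; exact hhs.elim
        | atom a =>
          rw [hd] at hhs hhead
          exact ⟨hhs, hhead⟩
        | choice a => exact absurd hd (hnorm _ hr a)
      · -- choice-head rule: head trivially satisfied
        cases hd : r.head with
        | bot => exact absurd hd hbot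
        | atom a => trivial
        | choice a => trivial
    · -- minimality
      intro J hJ hsat
      have hK : satReduct (J ∪ (I ∩ A)) I P := by
        intro r hr hbI hbK
        cases hd : r.head with
        | bot =>
          have := hmod r hr hbI; rw [hd] at this; exact this.elim
        | atom a =>
          have haI : a ∈ I := by have := hmod r hr hbI; rw [hd] at this; exact this
          show a ∈ J ∪ (I ∩ A)
          by_cases haA : a ∈ A
          · exact Or.inr ⟨haI, haA⟩
          · by_cases hbd : r.bodyAtoms ∩ A = ∅
            · have hmem : r ∈ omitA P A :=
                ⟨r, hr, Or.inl ⟨hbd, by rw [hd]; exact haA, rfl⟩⟩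
              have hnA : ∀ b ∈ r.bodyAtoms, b ∉ A := fun b hb hbA =>
                Set.eq_empty_iff_forall_notMem.mp hbd b ⟨hb, hbA⟩
              have hbI' : bodySat (I \ A) r := by
                refine ⟨fun b hb => ⟨hbI.1 hb, hnA b (Set.mem_union_left _ hb)⟩, ?_⟩
                intro b hb hbm
                exact hbI.2 b hb hbm.1
              have hbJ : bodySat J r := by
                refine ⟨fun b hb => ?_, fun b hb hbm => hbK.2 b hb (Or.inl hbm)⟩
                rcases hbK.1 hb with h | h
                · exact h
                · exact absurd h.2 (hnA b (Set.mem_union_left _ hb))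
              have := hsat r hmem hbI' hbJ
              rw [hd] at this
              exact Or.inl this
            · have hmem : (⟨Head.toChoice r.head, r.pos \ A, r.neg \ A⟩ : Rule α)
                  ∈ omitA P A :=
                ⟨r, hr, Or.inr ⟨hbd, by rw [hd]; exact haA,
                  by rw [hd]; exact fun h => Head.noConfusion rfl (heq_of_eq h), rfl⟩⟩
              have hbI' : bodySat (I \ A)
                  (⟨Head.toChoice r.head, r.pos \ A, r.neg \ A⟩ : Rule α) := by
                refine ⟨fun b hb => ⟨hbI.1 hb.1, hb.2⟩, ?_⟩
                intro b hb hbm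
                exact hbI.2 b hb.1 hbm.1
              have hbJ : bodySat J
                  (⟨Head.toChoice r.head, r.pos \ A, r.neg \ A⟩ : Rule α) := by
                refine ⟨fun b hb => ?_, fun b hb hbm => hbK.2 b hb.1 (Or.inl hbm)⟩
                rcases hbK.1 hb.1 with h | h
                · exact h
                · exact absurd h.2 hb.2
              have hred := hsat _ hmem hbI' hbJ
              simp only [hd, Head.toChoice] at hred
              exact Or.inl (hred ⟨haI, haA⟩)
        | choice a => exact absurd hd (hnorm r hr a)
      have hKI : (J ∪ (I ∩ A)) ⊆ I := by
        rintro a (h | h)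
        · exact (hJ h).1
        · exact h.1
      have hKeq : J ∪ (I ∩ A) = I := hmin _ hKI hK
      ext a
      constructor
      · exact fun h => hJ h
      · rintro ⟨haI, haA⟩
        rw [← hKeq] at haI
        rcases haI with h | h
        · exact h
        · exact absurd h.2 haA
  rw [hempty] at hI'
  exact hI'

end ASP
end

section
/- Unsatisfiability via spurious abstractions: for any normal logic program Π over atoms 𝒜, the following are equivalent: (1) AS(Π) = ∅; (2) there exists A ⊆ 𝒜 such that every answer set of omit(Π,A) is spurious; (3) for every A ⊆ 𝒜, every answer set of omit(Π,A) is spurious. -/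
universe u

namespace ASP

lemma answerSet_subset {α : Type u} {P : Program α} {𝒜 : Set α} (hP : ProgramOver P 𝒜)
    (hnorm : IsNormal P) {I : Set α} (hI : isAnswerSet P I) : I ⊆ 𝒜 := by
  have h : I ∩ 𝒜 = I := by
    apply hI.2 (I ∩ 𝒜) Set.inter_subset_left
    intro r hr hbI hbJ
    have hs := hI.1 r hr hbI
    cases hh : r.head with
    | bot => rw [hh] at hs; exact hs.elim
    | atom a =>
      rw [hh] at hs
      have ha : a ∈ r.head.atoms := by rw [hh]; exact rfl
      exact show a ∈ I ∩ 𝒜 from ⟨hs, hP r hr (Set.mem_union_left _ ha)⟩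
    | choice a => exact absurd hh (hnorm r hr a)
  intro a ha
  rw [← h] at ha
  exact ha.2

lemma project_answerSet {α : Type u} {P : Program α} {𝒜 : Set α} (A : Set α)
    (hP : ProgramOver P 𝒜) (hnorm : IsNormal P) {I : Set α} (hI : isAnswerSet P I) :
    isAnswerSet (omitA P A) (I \ A) := by
  constructor
  · -- model
    rintro r' ⟨r, hr, hrel⟩ hbody
    rcases hrel with ⟨hbA, hhead, rfl⟩ | ⟨hbA, hhead, hbot, rfl⟩
    · -- case (a)
      have hnotA : ∀ x ∈ r'.bodyAtoms, x ∉ A := by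
        intro x hx hxA
        exact absurd (Set.mem_inter hx hxA) (by rw [hbA]; exact id)
      have hbI : bodySat I r' := by
        constructor
        · exact fun x hx => (hbody.1 hx).1
        · intro x hx hxI
          exact hbody.2 x hx ⟨hxI, hnotA x (Set.mem_union_right _ hx)⟩
      have hs := hI.1 r' hr hbI
      cases hh : r'.head with
      | bot => rw [hh] at hs; exact hs.elim
      | atom a => rw [hh] at hs hhead; exact show a ∈ I \ A from ⟨hs, hhead⟩
      | choice a => exact absurd hh (hnorm r' hr a)
    · -- case (b): head becomes a choice, trivially satisfied
      cases hh : r.head with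
      | bot => exact absurd hh hbot
      | atom a => exact trivial
      | choice a => exact absurd hh (hnorm r hr a)
  · -- minimality
    intro Jhat hsub hsat
    set J : Set α := Jhat ∪ (I ∩ A) with hJ
    have hJI : J ⊆ I := by
      intro x hx
      rcases hx with hx | hx
      · exact (hsub hx).1
      · exact hx.1
    have hJred : satReduct J I P := by
      intro r hr hbI hbJ
      have hs := hI.1 r hr hbI
      cases hh : r.head with
      | bot => rw [hh] at hs; exact hs.elim
      | choice a => exact absurd hh (hnorm r hr a)
      | atom a =>
        rw [hh] at hs
        show a ∈ J
        by_cases haA : a ∈ A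
        · exact Set.mem_union_right _ ⟨hs, haA⟩
        · by_cases hbA : r.bodyAtoms ∩ A = ∅
          · -- rule kept unchanged
            have hmem : r ∈ omitA P A :=
              ⟨r, hr, Or.inl ⟨hbA, by rw [hh]; exact haA, rfl⟩⟩
            have hnotA : ∀ x ∈ r.bodyAtoms, x ∉ A := by
              intro x hx hxA
              exact absurd (Set.mem_inter hx hxA) (by rw [hbA]; exact id)
            have hb1 : bodySat (I \ A) r := by
              constructor
              · exact fun x hx => ⟨hbI.1 hx, hnotA x (Set.mem_union_left _ hx)⟩
              · exact fun x hx hxm => hbI.2 x hx hxm.1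
            have hb2 : bodySat Jhat r := by
              constructor
              · intro x hx
                rcases hbJ.1 hx with h | h
                · exact h
                · exact absurd h.2 (hnotA x (Set.mem_union_left _ hx))
              · exact fun x hx hxm => hbJ.2 x hx (Set.mem_union_left _ hxm)
            have hres := hsat r hmem hb1 hb2
            rw [hh] at hres
            exact Set.mem_union_left _ hres
          · -- rule turned into a choice rule
            have hmem : (⟨Head.toChoice r.head, r.pos \ A, r.neg \ A⟩ : Rule α) ∈ omitA P A :=
              ⟨r, hr, Or.inr ⟨hbA, by rw [hh]; exact haA,
                (by rw [hh]; intro h; cases h), rfl⟩⟩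
            have hb1 : bodySat (I \ A) (⟨Head.toChoice r.head, r.pos \ A, r.neg \ A⟩ : Rule α) := by
              constructor
              · exact fun x hx => ⟨hbI.1 hx.1, hx.2⟩
              · exact fun x hx hxm => hbI.2 x hx.1 hxm.1
            have hb2 : bodySat Jhat (⟨Head.toChoice r.head, r.pos \ A, r.neg \ A⟩ : Rule α) := by
              constructor
              · intro x hx
                rcases hbJ.1 hx.1 with h | h
                · exact h
                · exact absurd h.2 hx.2
              · exact fun x hx hxm => hbJ.2 x hx.1 (Set.mem_union_left _ hxm)
            have hres := hsat _ hmem hb1 hb2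
            rw [hh] at hres
            exact Set.mem_union_left _ (hres ⟨hs, haA⟩)
    have hJeq : J = I := hI.2 J hJI hJred
    ext a
    constructor
    · exact fun ha => hsub ha
    · intro ha
      have haJ : a ∈ J := by rw [hJeq]; exact ha.1
      rcases haJ with h | h
      · exact h
      · exact absurd h.2 ha.2

/-- unsatisfiability via spurious abstractions: the following
are equivalent: (1) `AS(P) = ∅`; (2) some `A ⊆ 𝒜` has only spurious answer sets;
(3) every `omit(P, A)` with `A ⊆ 𝒜` has only spurious answer sets.
Here `Î ∈ AS(omit(P, A))` is spurious iff `Î ∉ {I ∩ (𝒜 \ A) | I ∈ AS(P)}`. -/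
theorem unsat_iff_spurious_abstractions {α : Type u} (P : Program α) (𝒜 : Set α)
    (h𝒜 : 𝒜.Finite) (hnorm : IsNormal P) (hP : ProgramOver P 𝒜) :
    (AS P = ∅ ↔
      ∃ A ⊆ 𝒜, ∀ Ihat ∈ AS (omitA P A), Ihat ∉ (fun I => I ∩ (𝒜 \ A)) '' AS P) ∧
    (AS P = ∅ ↔
      ∀ A ⊆ 𝒜, ∀ Ihat ∈ AS (omitA P A), Ihat ∉ (fun I => I ∩ (𝒜 \ A)) '' AS P) := by
  have forward : AS P = ∅ →
      ∀ A ⊆ 𝒜, ∀ Ihat ∈ AS (omitA P A), Ihat ∉ (fun I => I ∩ (𝒜 \ A)) '' AS P := by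
    intro h A _ Ihat _ hmem
    rcases hmem with ⟨I, hI, _⟩
    rw [h] at hI; exact hI
  have backward : ∀ A ⊆ 𝒜,
      (∀ Ihat ∈ AS (omitA P A), Ihat ∉ (fun I => I ∩ (𝒜 \ A)) '' AS P) → AS P = ∅ := by
    intro A _ h
    ext I
    simp only [Set.mem_empty_iff_false, iff_false]
    intro hI
    have hsub := answerSet_subset hP hnorm hI
    have hproj := project_answerSet A hP hnorm hI
    have heq : I ∩ (𝒜 \ A) = I \ A := by
      ext x
      constructor
      · exact fun hx => ⟨hx.1, hx.2.2⟩
      · exact fun hx => ⟨hx.1, hsub hx.1, hx.2⟩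
    exact h (I \ A) hproj ⟨I, hI, heq⟩
  constructor
  · constructor
    · intro h; exact ⟨∅, Set.empty_subset _, forward h ∅ (Set.empty_subset _)⟩
    · rintro ⟨A, hA, hall⟩; exact backward A hA hall
  · constructor
    · exact forward
    · intro hall; exact backward ∅ (Set.empty_subset _) (hall ∅ (Set.empty_subset _))

end ASP
end

section
/- Commutation of single-atom omissions: for any normal logic program Π over atoms 𝒜 and any two atoms a₁, a₂ ∈ 𝒜, omit(omit(Π,{a₁}),{a₂}) = omit(omit(Π,{a₂}),{a₁}). -/
universe u

namespace ASP

lemma omitted_toChoice {α : Type u} (A : Set α) (h : Head α) :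
    Head.omitted A h.toChoice ↔ Head.omitted A h := by
  cases h <;> simp [Head.toChoice, Head.omitted]

lemma toChoice_toChoice {α : Type u} (h : Head α) :
    h.toChoice.toChoice = h.toChoice := by
  cases h <;> simp [Head.toChoice]

lemma toChoice_ne_bot {α : Type u} {h : Head α} (hne : h ≠ Head.bot) :
    h.toChoice ≠ Head.bot := by
  cases h
  · exact fun _ => hne rfl
  · simp [Head.toChoice]
  · simp [Head.toChoice]

lemma bodyAtoms_mk {α : Type u} (h : Head α) (p n : Set α) (A : Set α) :
    (Rule.bodyAtoms ⟨h, p \ A, n \ A⟩) = Rule.bodyAtoms ⟨h, p, n⟩ \ A := by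
  simp [Rule.bodyAtoms, Set.union_diff_distrib]

lemma inter_singleton_empty {α : Type u} (s : Set α) (a : α) :
    s ∩ {a} = ∅ ↔ a ∉ s := by
  constructor
  · intro h ha
    have : a ∈ s ∩ ({a} : Set α) := ⟨ha, rfl⟩
    simp [h] at this
  · intro h
    ext x
    simp only [Set.mem_inter_iff, Set.mem_singleton_iff, Set.mem_empty_iff_false,
      iff_false, not_and]
    rintro hx rfl; exact h hx

lemma omitRel_comp_swap {α : Type u} (a b : α) {r r'' : Rule α}
    (hc : ∃ r', omitRel {a} r r' ∧ omitRel {b} r' r'') :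
    ∃ r', omitRel {b} r r' ∧ omitRel {a} r' r'' := by
  obtain ⟨r', h1, h2⟩ := hc
  obtain ⟨h, p, n⟩ := r
  simp only [omitRel, ne_eq, inter_singleton_empty] at h1 h2 ⊢
  rcases h1 with ⟨ha, hoa, rfl⟩ | ⟨ha, hoa, hbot, rfl⟩
  · -- first step keeps r
    rcases h2 with ⟨hb, hob, rfl⟩ | ⟨hb, hob, hbot, rfl⟩
    · exact ⟨_, Or.inl ⟨hb, hob, rfl⟩, Or.inl ⟨ha, hoa, rfl⟩⟩
    · refine ⟨_, Or.inr ⟨hb, hob, hbot, rfl⟩, Or.inl ⟨?_, ?_, rfl⟩⟩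
      · rw [bodyAtoms_mk]
        intro hmem
        exact ha hmem.1
      · rw [omitted_toChoice]; exact hoa
  · -- first step transforms r
    rw [not_not] at ha
    rcases h2 with ⟨hb, hob, rfl⟩ | ⟨hb, hob, hbot2, rfl⟩
    · rw [bodyAtoms_mk] at hb
      rw [omitted_toChoice] at hob
      by_cases hab : b = a
      · subst hab
        refine ⟨_, Or.inr ⟨by simpa using ha, hoa, hbot, rfl⟩,
          Or.inl ⟨?_, by rw [omitted_toChoice]; exact hoa, rfl⟩⟩
        rw [bodyAtoms_mk]
        simp
      · have hbB : b ∉ Rule.bodyAtoms ⟨h, p, n⟩ := fun hmem => hb ⟨hmem, hab⟩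
        exact ⟨_, Or.inl ⟨hbB, hob, rfl⟩,
          Or.inr ⟨by simpa using ha, hoa, hbot, rfl⟩⟩
    · rw [bodyAtoms_mk, not_not] at hb
      rw [omitted_toChoice] at hob
      obtain ⟨hbB, hba⟩ : b ∈ Rule.bodyAtoms ⟨h, p, n⟩ ∧ b ≠ a := by
        simpa [Set.mem_diff, Rule.bodyAtoms] using hb
      refine ⟨⟨h.toChoice, p \ {b}, n \ {b}⟩,
        Or.inr ⟨by simpa using hbB, hob, hbot, rfl⟩,
        Or.inr ⟨?_, by rw [omitted_toChoice]; exact hoa,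
          toChoice_ne_bot hbot, ?_⟩⟩
      · rw [not_not, bodyAtoms_mk]
        exact ⟨ha, fun hh => hba hh.symm⟩
      · simp only [toChoice_toChoice, Rule.mk.injEq]
        refine ⟨by simp, Set.diff_diff_comm, Set.diff_diff_comm⟩

/-- commutation of single-atom omissions: for any normal
logic program `P` over a finite set `𝒜` of atoms and atoms `a₁, a₂ ∈ 𝒜`,
`omit(omit(P, {a₁}), {a₂}) = omit(omit(P, {a₂}), {a₁})`. -/
theorem omit_single_comm {α : Type u} (P : Program α) (𝒜 : Set α) (a₁ a₂ : α)
    (h𝒜 : 𝒜.Finite) (hnorm : IsNormal P) (hP : ProgramOver P 𝒜)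
    (h₁ : a₁ ∈ 𝒜) (h₂ : a₂ ∈ 𝒜) :
    omitA (omitA P {a₁}) {a₂} = omitA (omitA P {a₂}) {a₁} := by
  ext r''
  simp only [omitA, Set.mem_setOf_eq]
  constructor
  · rintro ⟨r', ⟨r, hr, h1⟩, h2⟩
    obtain ⟨s, hs1, hs2⟩ := omitRel_comp_swap a₁ a₂ ⟨r', h1, h2⟩
    exact ⟨s, ⟨r, hr, hs1⟩, hs2⟩
  · rintro ⟨r', ⟨r, hr, h1⟩, h2⟩
    obtain ⟨s, hs1, hs2⟩ := omitRel_comp_swap a₂ a₁ ⟨r', h1, h2⟩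
    exact ⟨s, ⟨r, hr, hs1⟩, hs2⟩

end ASP
end

section
/- Persistence of concrete answer sets under refinement: let Î be a concrete answer set of omit(Π,A) for a normal logic program Π over atoms 𝒜 and A ⊆ 𝒜. Then for every A' ⊆ A there exists an answer set Î' ∈ AS(omit(Π,A')) such that Î'|_Ā = Î, where Ā = 𝒜\A. -/
universe u

namespace ASP

lemma subset_of_AS {α : Type u} {P : Program α} {𝒜 I : Set α}
    (hnorm : IsNormal P) (hP : ProgramOver P 𝒜) (hI : I ∈ AS P) : I ⊆ 𝒜 := by
  have h : I ∩ 𝒜 = I := by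
    apply hI.2 (I ∩ 𝒜) Set.inter_subset_left
    intro r hr hbI hbJ
    have hs := hI.1 r hr hbI
    cases hh : r.head with
    | bot => rw [hh] at hs; exact hs
    | atom a =>
        rw [hh] at hs
        exact ⟨hs, hP r hr (Or.inl (by rw [hh]; rfl))⟩
    | choice a => exact absurd hh (hnorm r hr a)
  intro a ha
  rw [← h] at ha
  exact ha.2

lemma omit_answer {α : Type u} {P : Program α} {𝒜 B I : Set α}
    (hnorm : IsNormal P) (hP : ProgramOver P 𝒜) (hI : I ∈ AS P) :
    (I ∩ (𝒜 \ B)) ∈ AS (omitA P B) := by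
  have hI𝒜 : I ⊆ 𝒜 := subset_of_AS hnorm hP hI
  constructor
  · -- model
    rintro r' ⟨r, hr, hrel⟩ hbs
    rcases hrel with ⟨hdisj, hnotom, rfl⟩ | ⟨_, hnotom, hnb, rfl⟩
    · -- case (a)
      have hbI : bodySat I r' := by
        refine ⟨fun x hx => (hbs.1 hx).1, fun a ha haI => ?_⟩
        have ha𝒜 : a ∈ 𝒜 := hP r' hr (Or.inr (Or.inr ha))
        have haB : a ∉ B := fun hb =>
          Set.eq_empty_iff_forall_notMem.mp hdisj a ⟨Or.inr ha, hb⟩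
        exact hbs.2 a ha ⟨haI, ha𝒜, haB⟩
      have hs := hI.1 r' hr hbI
      cases hh : r'.head with
      | bot => rw [hh] at hs; exact hs
      | atom a =>
          rw [hh] at hs
          have : a ∉ B := by rw [hh] at hnotom; exact hnotom
          exact ⟨hs, hP r' hr (Or.inl (by rw [hh]; rfl)), this⟩
      | choice a => exact absurd hh (hnorm r' hr a)
    · -- case (b): head is a choice, trivially satisfied
      cases hh : r.head with
      | bot => exact absurd hh hnb
      | atom a => simp [hh, Head.toChoice, headSat]
      | choice a => exact absurd hh (hnorm r hr a)
  · -- minimality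
    intro J hJ hsat
    set Ibar := I ∩ (𝒜 \ B) with hIbar
    have hsat' : satReduct (J ∪ (I ∩ B)) I P := by
      intro r hr hbI hbJ'
      have hs := hI.1 r hr hbI
      cases hh : r.head with
      | bot => rw [hh] at hs; exact hs
      | atom a =>
          rw [hh] at hs
          have ha𝒜 : a ∈ 𝒜 := hP r hr (Or.inl (by rw [hh]; rfl))
          show a ∈ J ∪ (I ∩ B)
          by_cases haB : a ∈ B
          · exact Or.inr ⟨hs, haB⟩
          · by_cases hb : r.bodyAtoms ∩ B = ∅
            · -- rule kept unchanged
              have hmem : r ∈ omitA P B := ⟨r, hr, Or.inl ⟨hb, by rw [hh]; exact haB, rfl⟩⟩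
              have hbIbar : bodySat Ibar r := by
                refine ⟨fun x hx => ⟨hbI.1 hx, hP r hr (Or.inr (Or.inl hx)), fun hxB =>
                  Set.eq_empty_iff_forall_notMem.mp hb x ⟨Or.inl hx, hxB⟩⟩,
                  fun x hx hxIbar => hbI.2 x hx hxIbar.1⟩
              have hbJ : bodySat J r := by
                refine ⟨fun x hx => ?_, fun x hx hxJ => hbJ'.2 x hx (Or.inl hxJ)⟩
                rcases hbJ'.1 hx with h | h
                · exact h
                · exact absurd h.2 (fun hxB =>
                    Set.eq_empty_iff_forall_notMem.mp hb x ⟨Or.inl hx, hxB⟩)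
              have := hsat r hmem hbIbar hbJ
              rw [hh] at this
              exact Or.inl this
            · -- rule turned into a choice rule
              set r' : Rule α := ⟨Head.toChoice r.head, r.pos \ B, r.neg \ B⟩ with hr'
              have hmem : r' ∈ omitA P B :=
                ⟨r, hr, Or.inr ⟨hb, by rw [hh]; exact haB, (by rw [hh]; intro h; cases h), rfl⟩⟩
              have hbIbar : bodySat Ibar r' := by
                refine ⟨fun x hx => ⟨hbI.1 hx.1, hP r hr (Or.inr (Or.inl hx.1)), hx.2⟩,
                  fun x hx hxIbar => hbI.2 x hx.1 hxIbar.1⟩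
              have hbJ : bodySat J r' := by
                refine ⟨fun x hx => ?_, fun x hx hxJ => hbJ'.2 x hx.1 (Or.inl hxJ)⟩
                rcases hbJ'.1 hx.1 with h | h
                · exact h
                · exact absurd h.2 hx.2
              have := hsat r' hmem hbIbar hbJ
              rw [hr'] at this
              simp only [hh, Head.toChoice] at this
              exact Or.inl (this ⟨hs, ha𝒜, haB⟩)
      | choice a => exact absurd hh (hnorm r hr a)
    have hsub : J ∪ (I ∩ B) ⊆ I := by
      intro x hx
      rcases hx with hx | hx
      · exact (hJ hx).1
      · exact hx.1
    have heq := hI.2 (J ∪ (I ∩ B)) hsub hsat'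
    ext x
    constructor
    · exact fun hx => hJ hx
    · intro hx
      have : x ∈ J ∪ (I ∩ B) := by rw [heq]; exact hx.1
      rcases this with h | h
      · exact h
      · exact absurd h.2 hx.2.2

/-- persistence of concrete answer sets under refinement:
if `Î` is a concrete answer set of `omit(P, A)` (with `A ⊆ 𝒜`), then for every
`A' ⊆ A` there is an answer set `Î'` of `omit(P, A')` with `Î' ∩ (𝒜 \ A) = Î`. -/
theorem concrete_persists {α : Type u} (P : Program α) (𝒜 A Ihat : Set α)
    (h𝒜 : 𝒜.Finite) (hnorm : IsNormal P) (hP : ProgramOver P 𝒜)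
    (hA : A ⊆ 𝒜) (hIhat : Ihat ∈ AS (omitA P A))
    (hconcrete : Ihat ∈ (fun I => I ∩ (𝒜 \ A)) '' AS P) :
    ∀ A' ⊆ A, ∃ Ihat' ∈ AS (omitA P A'), Ihat' ∩ (𝒜 \ A) = Ihat := by
  intro A' hA'
  obtain ⟨I, hIAS, hIproj⟩ := hconcrete
  refine ⟨I ∩ (𝒜 \ A'), omit_answer hnorm hP hIAS, ?_⟩
  rw [← hIproj]
  ext x
  simp only [Set.mem_inter_iff, Set.mem_diff]
  constructor
  · exact fun h => ⟨h.1.1, h.2⟩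
  · exact fun h => ⟨⟨h.1, h.2.1, fun hx => h.2.2 (hA' hx)⟩, h.2⟩

end ASP
end

section
/- Convexity of spurious answer sets: suppose Î ∈ AS(omit(Π,A)) is spurious and omit(Π,A'), where A' ⊆ A, has some answer set Î' with Î'|_Ā = Î. Then for every A'' with A' ⊆ A'' ⊆ A it holds that Î'|_{Ā''} ∈ AS(omit(Π,A'')) and Î'|_{Ā''} is a spurious answer set of omit(Π,A''), where Ā = 𝒜\A and Ā'' = 𝒜\A''. -/
universe u

namespace ASP

lemma toChoice_atoms {α : Type u} (h : Head α) : h.toChoice.atoms = h.atoms := by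
  cases h <;> rfl

lemma head_cases {α : Type u} {P : Program α} (hnorm : IsNormal P) {r : Rule α}
    (hr : r ∈ P) : r.head = Head.bot ∨ ∃ a, r.head = Head.atom a := by
  cases h : r.head with
  | bot => exact Or.inl rfl
  | atom a => exact Or.inr ⟨a, rfl⟩
  | choice a => exact absurd h (hnorm r hr a)

/-- convexity of spurious answer sets: suppose
`Î ∈ AS(omit(P, A))` is spurious and `omit(P, A')` with `A' ⊆ A` has an answer
set `Î'` with `Î' ∩ (𝒜 \ A) = Î`. Then for every `A''` with `A' ⊆ A'' ⊆ A`,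
`Î' ∩ (𝒜 \ A'')` is an answer set of `omit(P, A'')` and it is spurious. -/
theorem spurious_convex {α : Type u} (P : Program α) (𝒜 A A' Ihat Ihat' : Set α)
    (h𝒜 : 𝒜.Finite) (hnorm : IsNormal P) (hP : ProgramOver P 𝒜)
    (hA : A ⊆ 𝒜) (hA' : A' ⊆ A)
    (hIhat : Ihat ∈ AS (omitA P A))
    (hspur : Ihat ∉ (fun I => I ∩ (𝒜 \ A)) '' AS P)
    (hIhat' : Ihat' ∈ AS (omitA P A'))
    (hproj : Ihat' ∩ (𝒜 \ A) = Ihat) :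
    ∀ A'', A' ⊆ A'' → A'' ⊆ A →
      Ihat' ∩ (𝒜 \ A'') ∈ AS (omitA P A'') ∧
      Ihat' ∩ (𝒜 \ A'') ∉ (fun I => I ∩ (𝒜 \ A'')) '' AS P := by
  intro A'' hA'A'' hA''A
  obtain ⟨hmodel', hmin'⟩ := hIhat'
  -- first: `Ihat' ⊆ 𝒜`
  have hsub : Ihat' ⊆ 𝒜 := by
    have hsat : satReduct (Ihat' ∩ 𝒜) Ihat' (omitA P A') := by
      rintro r' ⟨r, hr, hrel⟩ hbI hbJ
      have hhs := hmodel' r' ⟨r, hr, hrel⟩ hbI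
      have hatoms : r'.head.atoms ⊆ 𝒜 := by
        rcases hrel with ⟨_, _, heq⟩ | ⟨_, _, _, heq⟩
        · rw [heq]
          exact fun x hx => hP r hr (Or.inl hx)
        · rw [heq]
          show Head.atoms r.head.toChoice ⊆ 𝒜
          rw [toChoice_atoms]
          exact fun x hx => hP r hr (Or.inl hx)
      cases hh : r'.head with
      | bot => rw [hh] at hhs; exact hhs.elim
      | atom a =>
        rw [hh] at hhs hatoms
        exact ⟨hhs, hatoms rfl⟩
      | choice a =>
        rw [hh] at hatoms
        exact fun ha => ⟨ha, hatoms rfl⟩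
    have heq := hmin' (Ihat' ∩ 𝒜) Set.inter_subset_left hsat
    intro x hx
    rw [← heq] at hx
    exact hx.2
  have hJeq : Ihat' ∩ (𝒜 \ A'') = Ihat' \ A'' := by
    ext x
    simp only [Set.mem_inter_iff, Set.mem_diff]
    exact ⟨fun h => ⟨h.1, h.2.2⟩, fun h => ⟨h.1, hsub h.1, h.2⟩⟩
  constructor
  · rw [hJeq]
    constructor
    · -- `Ihat' \ A''` is a model of `omit(P, A'')`
      rintro r'' ⟨r, hr, hrel⟩ hbJ
      rcases hrel with ⟨hb0, hnot, rfl⟩ | ⟨hbne, hnot, hnbot, rfl⟩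
      · -- rule kept unchanged
        have hb0' : r''.bodyAtoms ∩ A' = ∅ := by
          rw [Set.eq_empty_iff_forall_notMem] at hb0 ⊢
          exact fun x hx => hb0 x ⟨hx.1, hA'A'' hx.2⟩
        have hnot' : ¬ Head.omitted A' r''.head := by
          intro h
          apply hnot
          cases hh : r''.head with
          | bot => rw [hh] at h; exact (h : False).elim
          | atom a => rw [hh] at h; exact hA'A'' h
          | choice a => rw [hh] at h; exact hA'A'' h
        have hbI : bodySat Ihat' r'' := by
          refine ⟨fun x hx => (hbJ.1 hx).1, fun x hn hxI => ?_⟩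
          refine hbJ.2 x hn ⟨hxI, fun hxA => ?_⟩
          rw [Set.eq_empty_iff_forall_notMem] at hb0
          exact hb0 x ⟨Or.inr hn, hxA⟩
        have hhs := hmodel' r'' ⟨r'', hr, Or.inl ⟨hb0', hnot', rfl⟩⟩ hbI
        rcases head_cases hnorm hr with hbot | ⟨a, ha⟩
        · rw [hbot] at hhs ⊢; exact hhs.elim
        · rw [ha] at hhs hnot ⊢
          exact ⟨hhs, hnot⟩
      · -- rule became a choice rule: head trivially satisfied
        rcases head_cases hnorm hr with hbot | ⟨a, ha⟩
        · exact absurd hbot hnbot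
        · rw [ha]
          exact trivial
    · -- minimality
      intro K hK hsatK
      have hK'K : ∀ x, x ∈ K ∪ (Ihat' ∩ A'') → x ∉ A'' → x ∈ K := by
        rintro x (hx | hx) hnx
        · exact hx
        · exact absurd hx.2 hnx
      have hK'sub : K ∪ (Ihat' ∩ A'') ⊆ Ihat' := by
        rintro x (hx | hx)
        · exact (hK hx).1
        · exact hx.1
      have hkey : satReduct (K ∪ (Ihat' ∩ A'')) Ihat' (omitA P A') := by
        rintro r' ⟨r, hr, hrel⟩ hbI hbK'
        rcases hrel with ⟨hb0, hnot, rfl⟩ | ⟨hbne, hnot, hnbot, rfl⟩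
        · -- rule kept unchanged in `omit(P, A')`
          have hhs := hmodel' r' ⟨r', hr, Or.inl ⟨hb0, hnot, rfl⟩⟩ hbI
          rcases head_cases hnorm hr with hbot | ⟨a, ha⟩
          · rw [hbot] at hhs ⊢; exact hhs.elim
          · rw [ha] at hhs hnot ⊢
            by_cases haA'' : a ∈ A''
            · exact Or.inr ⟨hhs, haA''⟩
            · by_cases hb'' : r'.bodyAtoms ∩ A'' = ∅
              · -- kept unchanged also in `omit(P, A'')`
                have hnot'' : ¬ Head.omitted A'' r'.head := by rw [ha]; exact haA''
                have hrm : r' ∈ omitA P A'' := ⟨r', hr, Or.inl ⟨hb'', hnot'', rfl⟩⟩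
                have hbJr : bodySat (Ihat' \ A'') r' := by
                  refine ⟨fun x hx => ⟨hbI.1 hx, fun hxA => ?_⟩, fun x hn hxJ => hbI.2 x hn hxJ.1⟩
                  rw [Set.eq_empty_iff_forall_notMem] at hb''
                  exact hb'' x ⟨Or.inl hx, hxA⟩
                have hbKr : bodySat K r' := by
                  refine ⟨fun x hx => hK'K x (hbK'.1 hx) ?_, fun x hn hxK => hbK'.2 x hn (Or.inl hxK)⟩
                  intro hxA
                  rw [Set.eq_empty_iff_forall_notMem] at hb''
                  exact hb'' x ⟨Or.inl hx, hxA⟩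
                have hth := hsatK r' hrm hbJr hbKr
                rw [ha] at hth
                exact Or.inl hth
              · -- becomes a choice rule in `omit(P, A'')`
                have hnot'' : ¬ Head.omitted A'' r'.head := by rw [ha]; exact haA''
                have hnbot : r'.head ≠ Head.bot := by rw [ha]; exact fun h => nomatch h
                have hrm : (⟨Head.choice a, r'.pos \ A'', r'.neg \ A''⟩ : Rule α) ∈ omitA P A'' :=
                  ⟨r', hr, Or.inr ⟨hb'', hnot'', hnbot, by rw [ha]; rfl⟩⟩
                have hbJr : bodySat (Ihat' \ A'') (⟨Head.choice a, r'.pos \ A'', r'.neg \ A''⟩ : Rule α) :=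
                  ⟨fun x hx => ⟨hbI.1 hx.1, hx.2⟩, fun x hn hxJ => hbI.2 x hn.1 hxJ.1⟩
                have hbKr : bodySat K (⟨Head.choice a, r'.pos \ A'', r'.neg \ A''⟩ : Rule α) :=
                  ⟨fun x hx => hK'K x (hbK'.1 hx.1) hx.2, fun x hn hxK => hbK'.2 x hn.1 (Or.inl hxK)⟩
                have hth := hsatK _ hrm hbJr hbKr
                exact Or.inl (hth ⟨hhs, haA''⟩)
        · -- rule became a choice rule in `omit(P, A')`
          rcases head_cases hnorm hr with hbot | ⟨a, ha⟩
          · exact absurd hbot hnbot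
          · rw [ha]
            intro haI
            by_cases haA'' : a ∈ A''
            · exact Or.inr ⟨haI, haA''⟩
            · have hb''ne : r.bodyAtoms ∩ A'' ≠ ∅ := by
                intro h
                apply hbne
                rw [Set.eq_empty_iff_forall_notMem] at h ⊢
                exact fun x hx => h x ⟨hx.1, hA'A'' hx.2⟩
              have hnot'' : ¬ Head.omitted A'' r.head := by rw [ha]; exact haA''
              have hrm : (⟨Head.choice a, r.pos \ A'', r.neg \ A''⟩ : Rule α) ∈ omitA P A'' :=
                ⟨r, hr, Or.inr ⟨hb''ne, hnot'', hnbot, by rw [ha]; rfl⟩⟩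
              have hbJr : bodySat (Ihat' \ A'') (⟨Head.choice a, r.pos \ A'', r.neg \ A''⟩ : Rule α) := by
                constructor
                · intro x hx
                  exact ⟨hbI.1 ⟨hx.1, fun h => hx.2 (hA'A'' h)⟩, hx.2⟩
                · intro x hn hxJ
                  exact hbI.2 x ⟨hn.1, fun h => hn.2 (hA'A'' h)⟩ hxJ.1
              have hbKr : bodySat K (⟨Head.choice a, r.pos \ A'', r.neg \ A''⟩ : Rule α) := by
                constructor
                · intro x hx
                  exact hK'K x (hbK'.1 ⟨hx.1, fun h => hx.2 (hA'A'' h)⟩) hx.2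
                · intro x hn hxK
                  exact hbK'.2 x ⟨hn.1, fun h => hn.2 (hA'A'' h)⟩ (Or.inl hxK)
              have hth := hsatK _ hrm hbJr hbKr
              exact Or.inl (hth ⟨haI, haA''⟩)
      have hKeq := hmin' (K ∪ (Ihat' ∩ A'')) hK'sub hkey
      ext x
      constructor
      · exact fun hx => hK hx
      · intro hx
        refine hK'K x ?_ hx.2
        rw [hKeq]
        exact hx.1
  · -- spuriousness
    rintro ⟨I, hI, hEq⟩
    apply hspur
    refine ⟨I, hI, ?_⟩
    show I ∩ (𝒜 \ A) = Ihat
    replace hEq : I ∩ (𝒜 \ A'') = Ihat' ∩ (𝒜 \ A'') := hEq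
    have hdd : 𝒜 \ A ⊆ 𝒜 \ A'' := Set.diff_subset_diff_right hA''A
    have h1 : I ∩ (𝒜 \ A) = Ihat' ∩ (𝒜 \ A) := by
      ext x
      constructor
      · intro hx
        have hx' : x ∈ I ∩ (𝒜 \ A'') := ⟨hx.1, hdd hx.2⟩
        rw [hEq] at hx'
        exact ⟨hx'.1, hx.2⟩
      · intro hx
        have hx' : x ∈ Ihat' ∩ (𝒜 \ A'') := ⟨hx.1, hdd hx.2⟩
        rw [← hEq] at hx'
        exact ⟨hx'.1, hx.2⟩
    rw [h1]
    exact hproj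

end ASP
end

section
/- Splitting disjunctive rules yields an over-approximation: let Π be a disjunctive logic program over atoms 𝒜, and let Π' be the program obtained from Π by replacing each disjunctive rule α₁ ∨ … ∨ α_k ← B by the choice rules {α₁} ← B; … ; {α_k} ← B (each choice rule {α_i} ← B abbreviating α_i ← B, not ᾱ_i and ᾱ_i ← B, not α_i for fresh atoms ᾱ_i). Then for every answer set I ∈ AS(Π) there exists J ∈ AS(Π') with J ∩ 𝒜 = I. -/
universe u

namespace ASP

/-- A disjunctive rule: the head is a (finite, possibly empty) set of atoms,
where an empty head means `⊥` (a constraint). -/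
structure DRule (α : Type u) : Type u where
  head : Set α
  pos : Set α
  neg : Set α

def dBodySat {α : Type u} (I : Set α) (r : DRule α) : Prop :=
  r.pos ⊆ I ∧ ∀ a ∈ r.neg, a ∉ I

def dIsModel {α : Type u} (I : Set α) (P : Set (DRule α)) : Prop :=
  ∀ r ∈ P, dBodySat I r → ∃ a ∈ r.head, a ∈ I

/-- `J` is a (classical) model of the FLP-reduct `P^I`. -/
def dSatReduct {α : Type u} (J I : Set α) (P : Set (DRule α)) : Prop :=
  ∀ r ∈ P, dBodySat I r → dBodySat J r → ∃ a ∈ r.head, a ∈ J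

def dIsAnswerSet {α : Type u} (P : Set (DRule α)) (I : Set α) : Prop :=
  dIsModel I P ∧ ∀ J ⊆ I, dSatReduct J I P → J = I

def dAS {α : Type u} (P : Set (DRule α)) : Set (Set α) :=
  {I | dIsAnswerSet P I}

def DProgramOver {α : Type u} (P : Set (DRule α)) (𝒜 : Set α) : Prop :=
  ∀ r ∈ P, r.head ∪ r.pos ∪ r.neg ⊆ 𝒜

/-- The split of a disjunctive program: each disjunctive rule
`α₁ ∨ … ∨ α_k ← B` with `k ≥ 1` is replaced by the choice rules
`{α₁} ← B; …; {α_k} ← B`, and a rule with empty head remains a constraint. -/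
def split {α : Type u} (P : Set (DRule α)) : Program α :=
  {r' | ∃ r ∈ P,
    (r.head = ∅ ∧ r' = (⟨Head.bot, r.pos, r.neg⟩ : Rule α)) ∨
    (∃ a ∈ r.head, r' = (⟨Head.choice a, r.pos, r.neg⟩ : Rule α))}

/-- splitting disjunctive rules yields an over-approximation:
for every answer set `I` of the disjunctive program `P` there is an answer set
`J` of the split program with `J ∩ 𝒜 = I`. -/
theorem split_over_approximation {α : Type u} (P : Set (DRule α)) (𝒜 : Set α)
    (h𝒜 : 𝒜.Finite) (hP : DProgramOver P 𝒜)
    (hfin : ∀ r ∈ P, r.head.Finite) :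
    ∀ I ∈ dAS P, ∃ J ∈ AS (split P), J ∩ 𝒜 = I := by
  intro I hI
  obtain ⟨hIm, hImin⟩ := hI
  -- I ⊆ 𝒜
  have hIA : I ⊆ 𝒜 := by
    have h := hImin (I ∩ 𝒜) Set.inter_subset_left ?_
    · intro a ha; rw [← h] at ha; exact ha.2
    · intro r hr hBI _
      obtain ⟨a, haH, haI⟩ := hIm r hr hBI
      exact ⟨a, haH, haI, hP r hr (Or.inl (Or.inl haH))⟩
  refine ⟨I, ⟨?_, ?_⟩, by rw [Set.inter_eq_left.mpr hIA]⟩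
  · -- isModel I (split P)
    intro r' hr' hB
    obtain ⟨r, hr, hcase⟩ := hr'
    rcases hcase with ⟨hH, rfl⟩ | ⟨a, haH, rfl⟩
    · obtain ⟨a, haH, _⟩ := hIm r hr hB
      rw [hH] at haH; exact haH
    · trivial
  · -- minimality
    intro J hJI hsat
    apply hImin J hJI
    intro r hr hBI hBJ
    obtain ⟨a, haH, haI⟩ := hIm r hr hBI
    have hmem : (⟨Head.choice a, r.pos, r.neg⟩ : Rule α) ∈ split P :=
      ⟨r, hr, Or.inr ⟨a, haH, rfl⟩⟩
    have := hsat _ hmem hBI hBJ haI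
    exact ⟨a, haH, this⟩

end ASP
end
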